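/- arXiv:2308.10274 — 2 statements merged into one kernel-verified Lean document; each statement's English description precedes it below -/
import Mathlib

section
/- If r > N b_m / R_m and p > (1/β - N b_m/(r R_m β)) α b_m, then the Jacobian matrix of the system dx/dt = x(1-x)(pβ - α b_m y/R_m), dy/dt = r y(1 - y/R_m) - N (y/R_m) b_m (1+(1-x)α) evaluated at the equilibrium (1, R_m - N b_m/r) has both eigenvalues with negative real part (indeed, the Jacobian is lower-triangular with diagonal entries α b_m - α N b_m²/(R_m r) - p β < 0 and N b_m/R_m - r < 0). -/
/-- If r > N b_m / R_m and the inspection is sufficiently intense, then the Jacobian at the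
full-cooperation equilibrium (1, R_m - N b_m / r) is lower triangular with both diagonal
entries (= eigenvalues) negative. -/
theorem full_cooperation_equilibrium_stable
    (r α β p N Rm bm : ℝ)
    (hr : 0 < r) (hα : 0 < α) (hβ : 0 < β) (hp : 0 < p)
    (hN : 0 < N) (hRm : 0 < Rm) (hbm : 0 < bm)
    (hgrow : r > N * bm / Rm)
    (hinsp : p > (1 / β - N * bm / (r * Rm * β)) * α * bm) :
    α * bm - α * N * bm ^ 2 / (Rm * r) - p * β < 0 ∧
    N * bm / Rm - r < 0 := by
  constructor
  · have key : (1 / β - N * bm / (r * Rm * β)) * α * bm * β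
        = α * bm - α * N * bm ^ 2 / (Rm * r) := by
      field_simp
    have h := mul_lt_mul_of_pos_right hinsp hβ
    rw [key] at h
    linarith
  · have : N * bm / Rm < r := hgrow
    linarith
end

section
/- If r > N b_m/R_m (moderate or fast resource growth) and p̂ < (1/β - N b_m/(r R_m β)) α b_m, then at the equilibrium (1, R_m - N b_m/r) of the system dx/dt = x(1-x)(p̂β - α b_m y/R_m), dy/dt = r y(1-y/R_m) - N(y/R_m)b_m(1+(1-x)α), the Jacobian has a positive eigenvalue α b_m - α N b_m²/(R_m r) - p̂β > 0, so the full-cooperation equilibrium is linearly unstable. -/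
/-- If the inspection probability is insufficient, the Jacobian at the full-cooperation
equilibrium has a positive eigenvalue, so the equilibrium is linearly unstable. -/
theorem full_cooperation_unstable
    (r α β phat N Rm bm : ℝ)
    (hr : 0 < r) (hα : 0 < α) (hβ : 0 < β) (hp : 0 < phat)
    (hN : 0 < N) (hRm : 0 < Rm) (hbm : 0 < bm)
    (hgrow : r > N * bm / Rm)
    (hinsp : phat < (1 / β - N * bm / (r * Rm * β)) * α * bm) :
    α * bm - α * N * bm ^ 2 / (Rm * r) - phat * β > 0 := by
  have h := mul_lt_mul_of_pos_right hinsp hβ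
  have h2 : (1 / β - N * bm / (r * Rm * β)) * α * bm * β
      = α * bm - α * N * bm ^ 2 / (Rm * r) := by
    field_simp
  nlinarith [h, h2]
end
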